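/- arXiv:2009.11259 — 2 statements merged into one kernel-verified Lean document; each statement's English description precedes it below -/
import Mathlib

section
/- Let Ã(y) be the 2×2 diagonal matrix with entries ã₁₁(y) = 1 − (1/2) sin(2πy₁) sin(2πy₂), ã₂₂(y) = 1 + (1/2) sin(2πy₁) sin(2πy₂), ã₁₂ = ã₂₁ = 0, and let ṽ¹¹(y) := −(sin(2πy₁) sin(2πy₂))/(16π²), ṽ²²(y) := +(sin(2πy₁) sin(2πy₂))/(16π²), ṽ¹² = ṽ²¹ := 0. For j,k,l ∈ {1,2} define c_j^{kl} := ∫_Y (Ã(y)e_j) · ∇ṽ^{kl}(y) dy, where e_j is the j-th standard basis vector and Y = [0,1]². Then c_j^{kl} = 0 for all j,k,l ∈ {1,2}; in particular Ã is a c-good matrix. -/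
/-- Partial derivative w.r.t. the first variable. -/
noncomputable def p1 (f : ℝ → ℝ → ℝ) : ℝ → ℝ → ℝ := fun x y => deriv (fun t => f t y) x

/-- Partial derivative w.r.t. the second variable. -/
noncomputable def p2 (f : ℝ → ℝ → ℝ) : ℝ → ℝ → ℝ := fun x y => deriv (fun t => f x t) y

/-- Entry `ã₁₁` of the `c`-good matrix `Ã`. -/
noncomputable def at11 (y₁ y₂ : ℝ) : ℝ :=
  1 - (1/2) * Real.sin (2 * Real.pi * y₁) * Real.sin (2 * Real.pi * y₂)

/-- Entry `ã₂₂` of the `c`-good matrix `Ã`. -/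
noncomputable def at22 (y₁ y₂ : ℝ) : ℝ :=
  1 + (1/2) * Real.sin (2 * Real.pi * y₁) * Real.sin (2 * Real.pi * y₂)

/-- The diagonal entries `ã_{jj}` of `Ã`. -/
noncomputable def atdiag : Fin 2 → ℝ → ℝ → ℝ
  | 0 => at11
  | 1 => at22

/-- The `j`-th partial derivative operator. -/
noncomputable def pdd : Fin 2 → (ℝ → ℝ → ℝ) → ℝ → ℝ → ℝ
  | 0 => p1
  | 1 => p2

/-- The matrix `Ṽ = (ṽ^{kl})` of corrector functions for `Ã`. -/
noncomputable def vt : Fin 2 → Fin 2 → ℝ → ℝ → ℝ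
  | 0, 0 => fun y₁ y₂ =>
      -(Real.sin (2 * Real.pi * y₁) * Real.sin (2 * Real.pi * y₂)) / (16 * Real.pi ^ 2)
  | 1, 1 => fun y₁ y₂ =>
      (Real.sin (2 * Real.pi * y₁) * Real.sin (2 * Real.pi * y₂)) / (16 * Real.pi ^ 2)
  | _, _ => fun _ _ => 0

/-- The constants `c_j^{kl} = ∫_Y (Ã e_j)·∇ṽ^{kl}`; since `Ã` is diagonal the integrand is
`ã_{jj} ∂_j ṽ^{kl}` (the invariant measure of `Ã` is the constant 1, so no weight appears). -/
noncomputable def ct (j k l : Fin 2) : ℝ :=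
  ∫ y₁ in (0:ℝ)..1, ∫ y₂ in (0:ℝ)..1, atdiag j y₁ y₂ * pdd j (vt k l) y₁ y₂

/-! Every entry of `Ã` and `Ṽ` is built from `s(t) = sin (2πt)`, so each integrand
`ã_jj ∂_j ṽ^{kl}` is a sum of two separable products `f(y₁) g(y₂)`, and the double integral is
`∑ (∫ f) (∫ g)`. In every term one factor is `cos (2πt)` or `sin (2πt) cos (2πt)`, both of mean
zero over a period. -/

open Real intervalIntegral

lemma integral_comp_two_pi_mul (f : ℝ → ℝ) :
    ∫ x in (0:ℝ)..1, f (2 * π * x) = (2 * π)⁻¹ * ∫ x in (0:ℝ)..2 * π, f x := by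
  simp [integral_comp_mul_left f (by positivity : 2 * π ≠ 0)]

lemma integral_cos_two_pi_mul : ∫ x in (0:ℝ)..1, cos (2 * π * x) = 0 := by
  simp [integral_comp_two_pi_mul cos]

lemma integral_sin_mul_cos_two_pi_mul :
    ∫ x in (0:ℝ)..1, sin (2 * π * x) * cos (2 * π * x) = 0 := by
  simp [integral_comp_two_pi_mul (fun x => sin x * cos x), integral_sin_mul_cos₁]

lemma integral_integral_mul_add_mul {a b c d : ℝ} {f₁ g₁ f₂ g₂ : ℝ → ℝ}
    (hf₁ : IntervalIntegrable f₁ MeasureTheory.volume a b)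
    (hg₁ : IntervalIntegrable g₁ MeasureTheory.volume c d)
    (hf₂ : IntervalIntegrable f₂ MeasureTheory.volume a b)
    (hg₂ : IntervalIntegrable g₂ MeasureTheory.volume c d) :
    ∫ x in a..b, ∫ y in c..d, (f₁ x * g₁ y + f₂ x * g₂ y) =
      (∫ x in a..b, f₁ x) * (∫ y in c..d, g₁ y) + (∫ x in a..b, f₂ x) * (∫ y in c..d, g₂ y) := by
  have inner (x : ℝ) : ∫ y in c..d, (f₁ x * g₁ y + f₂ x * g₂ y) =
      f₁ x * (∫ y in c..d, g₁ y) + f₂ x * (∫ y in c..d, g₂ y) := by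
    rw [integral_add (hg₁.const_mul _) (hg₂.const_mul _), integral_const_mul, integral_const_mul]
  simp only [inner]
  rw [integral_add (hf₁.mul_const _) (hf₂.mul_const _), integral_mul_const, integral_mul_const]

lemma hasDerivAt_sin_two_pi_mul (x : ℝ) :
    HasDerivAt (fun t => sin (2 * π * t)) (2 * π * cos (2 * π * x)) x := by
  simpa [mul_comm] using ((hasDerivAt_id x).const_mul (2 * π)).sin

lemma p1_mul_sin_mul_sin (κ y₁ y₂ : ℝ) :
    p1 (fun y₁ y₂ => κ * (sin (2 * π * y₁) * sin (2 * π * y₂))) y₁ y₂ =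
      κ * (2 * π * cos (2 * π * y₁) * sin (2 * π * y₂)) :=
  (((hasDerivAt_sin_two_pi_mul y₁).mul_const _).const_mul κ).deriv

lemma p2_mul_sin_mul_sin (κ y₁ y₂ : ℝ) :
    p2 (fun y₁ y₂ => κ * (sin (2 * π * y₁) * sin (2 * π * y₂))) y₁ y₂ =
      κ * (sin (2 * π * y₁) * (2 * π * cos (2 * π * y₂))) :=
  (((hasDerivAt_sin_two_pi_mul y₂).const_mul _).const_mul κ).deriv

lemma vt_eq_mul_sin_mul_sin (k l : Fin 2) :
    ∃ κ : ℝ, vt k l = fun y₁ y₂ => κ * (sin (2 * π * y₁) * sin (2 * π * y₂)) := by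
  match k, l with
  | 0, 0 => exact ⟨-1 / (16 * π ^ 2), by funext y₁ y₂; simp only [vt]; ring⟩
  | 1, 1 => exact ⟨1 / (16 * π ^ 2), by funext y₁ y₂; simp only [vt]; ring⟩
  | 0, 1 | 1, 0 => exact ⟨0, by funext y₁ y₂; simp [vt]⟩

lemma ct_zero (k l : Fin 2) : ct 0 k l = 0 := by
  obtain ⟨κ, hκ⟩ := vt_eq_mul_sin_mul_sin k l
  have integrand (y₁ y₂ : ℝ) : atdiag 0 y₁ y₂ * pdd 0 (vt k l) y₁ y₂ =
      2 * π * κ * cos (2 * π * y₁) * sin (2 * π * y₂) +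
        -(π * κ) * (sin (2 * π * y₁) * cos (2 * π * y₁)) * sin (2 * π * y₂) ^ 2 := by
    simp only [atdiag, pdd, at11, hκ, p1_mul_sin_mul_sin]
    ring
  simp only [ct, integrand]
  rw [integral_integral_mul_add_mul]
  · simp only [integral_const_mul, integral_cos_two_pi_mul, integral_sin_mul_cos_two_pi_mul,
      mul_zero, zero_mul, add_zero]
  all_goals exact Continuous.intervalIntegrable (by fun_prop) _ _

lemma ct_one (k l : Fin 2) : ct 1 k l = 0 := by
  obtain ⟨κ, hκ⟩ := vt_eq_mul_sin_mul_sin k l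
  have integrand (y₁ y₂ : ℝ) : atdiag 1 y₁ y₂ * pdd 1 (vt k l) y₁ y₂ =
      2 * π * κ * sin (2 * π * y₁) * cos (2 * π * y₂) +
        π * κ * sin (2 * π * y₁) ^ 2 * (sin (2 * π * y₂) * cos (2 * π * y₂)) := by
    simp only [atdiag, pdd, at22, hκ, p2_mul_sin_mul_sin]
    ring
  simp only [ct, integrand]
  rw [integral_integral_mul_add_mul]
  · simp only [integral_cos_two_pi_mul, integral_sin_mul_cos_two_pi_mul, mul_zero, add_zero]
  all_goals exact Continuous.intervalIntegrable (by fun_prop) _ _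

/-- All the constants `c_j^{kl}` of `Ã` vanish; in particular `Ã` is a `c`-good matrix. -/
theorem explicit_c_good_matrix : ∀ j k l : Fin 2, ct j k l = 0 := by
  rw [Fin.forall_fin_two]
  exact ⟨ct_zero, ct_one⟩
end

section
/- Let n ≥ 1, Ω ⊆ ℝⁿ open, ε > 0. Let A : ℝⁿ → ℝ^{n×n} have symmetric values with entries a_{ij}. Suppose: u : Ω → ℝ is five times continuously differentiable; for each k,l, v^{kl} : ℝⁿ → ℝ is continuously differentiable; constants c_j^{kl} ∈ ℝ are given for j,k,l ∈ {1,…,n}; for each j,k,l, χ^{jkl} : ℝⁿ → ℝ is twice continuously differentiable with −A(y):D²χ^{jkl}(y) = (A(y)e_j)·∇v^{kl}(y) − c_j^{kl} for all y ∈ ℝⁿ; wᵋ : Ω → ℝ is twice differentiable with −A(x/ε):D²wᵋ(x) = ∑_{i,j,k,l=1}^{n} a_{ij}(x/ε) ∂_i v^{kl}(x/ε) ∂³_{jkl}u(x) on Ω; zᵋ : Ω → ℝ is twice differentiable with −A(x/ε):D²zᵋ(x) = −h(x) on Ω, where h := ∑_{j,k,l=1}^{n} c_j^{kl} ∂³_{jkl}u;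 and θ_χᵋ : Ω → ℝ is twice differentiable with A(x/ε):D²θ_χᵋ(x) = 0 on Ω. Define ψᵋ(x) := ε² ( ∑_{j,k,l=1}^{n} χ^{jkl}(x/ε) ∂³_{jkl}u(x) + θ_χᵋ(x) ). Then for every x ∈ Ω: −A(x/ε):D²(wᵋ + zᵋ − ψᵋ)(x) = ε ∑_{d,i,j,k,l=1}^{n} a_{ij}(x/ε) [ 2 ∂_i χ^{dkl}(x/ε) ∂⁴_{djkl}u(x) + ε χ^{dkl}(x/ε) ∂⁵_{dijkl}u(x) ]. -/
/-!
The operator `M : D²` (`doubleDotHess M`) is linear, and on a two-scale product the Leibniz and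
chain rules give
`ε² A(x/ε):D²[χ(·/ε) T](x)`
`  = (A:D²χ)(x/ε) T(x) + 2ε A(x/ε)∇χ(x/ε)·∇T(x) + ε² χ(x/ε) A(x/ε):D²T(x)`,
the two cross terms being equal because `A` is symmetric. Taking `T = ∂³_{dkl}u`, the cell problem
for `χ^{dkl}` replaces `(A:D²χ^{dkl})(x/ε)` by `c_d^{kl} − (A(x/ε)e_d)·∇v^{kl}(x/ε)`, and these
terms cancel exactly against the right-hand sides of the equations for `wᵋ` and `zᵋ`, while
`θ_χᵋ` contributes nothing. Commuting the derivatives of `u` puts the remaining terms, of order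
`ε` and `ε²`, in the stated form.
-/

/-- The partial derivative `∂_i f` of `f : ℝⁿ → ℝ`, as the Fréchet derivative applied to the
`i`-th standard basis vector. -/
noncomputable def pd {n : ℕ} (i : Fin n) (f : (Fin n → ℝ) → ℝ) : (Fin n → ℝ) → ℝ :=
  fun x => fderiv ℝ f x (Pi.single i 1)

/-- `f` is twice differentiable on `Ω`: it is differentiable on `Ω` and so are all its first
partial derivatives. -/
def TwiceDiffOn {n : ℕ} (f : (Fin n → ℝ) → ℝ) (Ω : Set (Fin n → ℝ)) : Prop :=
  DifferentiableOn ℝ f Ω ∧ ∀ i : Fin n, DifferentiableOn ℝ (pd i f) Ω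

open Filter Topology Finset

variable {n : ℕ} {f g : (Fin n → ℝ) → ℝ} {Ω : Set (Fin n → ℝ)} {x : Fin n → ℝ}

theorem Filter.EventuallyEq.pd_eq (h : f =ᶠ[𝓝 x] g) (i : Fin n) : pd i f x = pd i g x := by
  simp only [pd, h.fderiv_eq]

section Pointwise

variable (i : Fin n)

theorem pd_add (hf : DifferentiableAt ℝ f x) (hg : DifferentiableAt ℝ g x) :
    pd i (fun y => f y + g y) x = pd i f x + pd i g x := by
  simp [pd, fderiv_fun_add hf hg]

theorem pd_sub (hf : DifferentiableAt ℝ f x) (hg : DifferentiableAt ℝ g x) :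
    pd i (fun y => f y - g y) x = pd i f x - pd i g x := by
  simp [pd, fderiv_fun_sub hf hg]

theorem pd_const_mul (c : ℝ) (hf : DifferentiableAt ℝ f x) :
    pd i (fun y => c * f y) x = c * pd i f x := by
  simp [pd, fderiv_const_mul hf]

theorem pd_mul (hf : DifferentiableAt ℝ f x) (hg : DifferentiableAt ℝ g x) :
    pd i (fun y => f y * g y) x = pd i f x * g x + f x * pd i g x := by
  simp [pd, fderiv_fun_mul hf hg]
  ring

theorem pd_sum {ι : Type*} (s : Finset ι) {f : ι → (Fin n → ℝ) → ℝ}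
    (hf : ∀ a ∈ s, DifferentiableAt ℝ (f a) x) :
    pd i (fun y => ∑ a ∈ s, f a y) x = ∑ a ∈ s, pd i (f a) x := by
  simp [pd, fderiv_fun_sum hf]

theorem pd_comp_smul {ε : ℝ} (hf : DifferentiableAt ℝ f (ε⁻¹ • x)) :
    pd i (fun y => f (ε⁻¹ • y)) x = ε⁻¹ * pd i f (ε⁻¹ • x) := by
  have hscale : HasFDerivAt (fun y : Fin n → ℝ => ε⁻¹ • y)
      (ε⁻¹ • ContinuousLinearMap.id ℝ (Fin n → ℝ)) x := (hasFDerivAt_id x).const_smul ε⁻¹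
  have hchain : fderiv ℝ (fun y => f (ε⁻¹ • y)) x
      = (fderiv ℝ f (ε⁻¹ • x)).comp (ε⁻¹ • ContinuousLinearMap.id ℝ (Fin n → ℝ)) :=
    (hf.hasFDerivAt.comp x hscale).fderiv
  simp [pd, hchain]

end Pointwise

theorem contDiffOn_pd (hΩ : IsOpen Ω) {m N : WithTop ℕ∞} (hf : ContDiffOn ℝ N f Ω)
    (hmN : m + 1 ≤ N) (i : Fin n) : ContDiffOn ℝ m (pd i f) Ω :=
  ((hf.fderivWithin hΩ.uniqueDiffOn hmN).clm_apply
    (contDiffOn_const (c := Pi.single i 1))).congr fun y hy => by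
    simp [pd, fderivWithin_of_isOpen hΩ hy]

theorem pd_comm (hf : ContDiffAt ℝ 2 f x) (a b : Fin n) :
    pd a (pd b f) x = pd b (pd a f) x := by
  have hdf : DifferentiableAt ℝ (fderiv ℝ f) x :=
    (hf.fderiv_right (m := 1) le_rfl).differentiableAt (by norm_num)
  have hflip (v : Fin n → ℝ) :
      fderiv ℝ (fun y => fderiv ℝ f y v) x = (fderiv ℝ (fderiv ℝ f) x).flip v := by
    rw [fderiv_clm_apply hdf (differentiableAt_const v)]
    simp
  change fderiv ℝ (fun y => fderiv ℝ f y (Pi.single b 1)) x (Pi.single a 1)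
    = fderiv ℝ (fun y => fderiv ℝ f y (Pi.single a 1)) x (Pi.single b 1)
  rw [hflip, hflip]
  exact hf.isSymmSndFDerivAt (by simp) _ _

theorem pd_pd_pd_comm (hΩ : IsOpen Ω) (hf : ContDiffOn ℝ 3 f Ω) (hx : x ∈ Ω) (i j d : Fin n) :
    pd i (pd j (pd d f)) x = pd d (pd i (pd j f)) x := by
  have hjd : pd j (pd d f) =ᶠ[𝓝 x] pd d (pd j f) :=
    eventually_of_mem (hΩ.mem_nhds hx) fun y hy =>
      pd_comm ((hf.of_le (by norm_num)).contDiffAt (hΩ.mem_nhds hy)) j d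
  rw [hjd.pd_eq]
  exact pd_comm ((contDiffOn_pd hΩ hf (by norm_num) j).contDiffAt (hΩ.mem_nhds hx)) i d

theorem ContDiffOn.twiceDiffOn (hf : ContDiffOn ℝ 2 f Ω) (hΩ : IsOpen Ω) : TwiceDiffOn f Ω :=
  ⟨hf.differentiableOn (by norm_num), fun i =>
    (contDiffOn_pd hΩ hf (m := 1) (by norm_num) i).differentiableOn (by norm_num)⟩

namespace TwiceDiffOn

theorem differentiableAt (hf : TwiceDiffOn f Ω) (hΩ : IsOpen Ω) (hx : x ∈ Ω) :
    DifferentiableAt ℝ f x :=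
  hf.1.differentiableAt (hΩ.mem_nhds hx)

theorem differentiableAt_pd (hf : TwiceDiffOn f Ω) (hΩ : IsOpen Ω) (hx : x ∈ Ω) (i : Fin n) :
    DifferentiableAt ℝ (pd i f) x :=
  (hf.2 i).differentiableAt (hΩ.mem_nhds hx)

theorem add (hf : TwiceDiffOn f Ω) (hg : TwiceDiffOn g Ω) (hΩ : IsOpen Ω) :
    TwiceDiffOn (fun y => f y + g y) Ω :=
  ⟨hf.1.add hg.1, fun i => ((hf.2 i).add (hg.2 i)).congr fun _ hy =>
    pd_add i (hf.differentiableAt hΩ hy) (hg.differentiableAt hΩ hy)⟩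

theorem const_mul (hf : TwiceDiffOn f Ω) (hΩ : IsOpen Ω) (c : ℝ) :
    TwiceDiffOn (fun y => c * f y) Ω :=
  ⟨hf.1.const_mul c, fun i => ((hf.2 i).const_mul c).congr fun _ hy =>
    pd_const_mul i c (hf.differentiableAt hΩ hy)⟩

theorem sum (hΩ : IsOpen Ω) {ι : Type*} {s : Finset ι} {f : ι → (Fin n → ℝ) → ℝ}
    (hf : ∀ a ∈ s, TwiceDiffOn (f a) Ω) : TwiceDiffOn (fun y => ∑ a ∈ s, f a y) Ω :=
  ⟨DifferentiableOn.fun_sum fun a ha => (hf a ha).1, fun i =>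
    (DifferentiableOn.fun_sum fun a ha => (hf a ha).2 i).congr fun _ hy =>
      pd_sum i s fun a ha => (hf a ha).differentiableAt hΩ hy⟩

end TwiceDiffOn

section SecondDerivatives

variable (i j : Fin n)

theorem pd_pd_add (hΩ : IsOpen Ω) (hx : x ∈ Ω) (hf : TwiceDiffOn f Ω) (hg : TwiceDiffOn g Ω) :
    pd i (pd j (fun y => f y + g y)) x = pd i (pd j f) x + pd i (pd j g) x := by
  have h : pd j (fun y => f y + g y) =ᶠ[𝓝 x] fun y => pd j f y + pd j g y :=
    eventually_of_mem (hΩ.mem_nhds hx) fun y hy =>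
      pd_add j (hf.differentiableAt hΩ hy) (hg.differentiableAt hΩ hy)
  rw [h.pd_eq, pd_add i (hf.differentiableAt_pd hΩ hx j) (hg.differentiableAt_pd hΩ hx j)]

theorem pd_pd_sub (hΩ : IsOpen Ω) (hx : x ∈ Ω) (hf : TwiceDiffOn f Ω) (hg : TwiceDiffOn g Ω) :
    pd i (pd j (fun y => f y - g y)) x = pd i (pd j f) x - pd i (pd j g) x := by
  have h : pd j (fun y => f y - g y) =ᶠ[𝓝 x] fun y => pd j f y - pd j g y :=
    eventually_of_mem (hΩ.mem_nhds hx) fun y hy =>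
      pd_sub j (hf.differentiableAt hΩ hy) (hg.differentiableAt hΩ hy)
  rw [h.pd_eq, pd_sub i (hf.differentiableAt_pd hΩ hx j) (hg.differentiableAt_pd hΩ hx j)]

theorem pd_pd_const_mul (hΩ : IsOpen Ω) (hx : x ∈ Ω) (c : ℝ) (hf : TwiceDiffOn f Ω) :
    pd i (pd j (fun y => c * f y)) x = c * pd i (pd j f) x := by
  have h : pd j (fun y => c * f y) =ᶠ[𝓝 x] fun y => c * pd j f y :=
    eventually_of_mem (hΩ.mem_nhds hx) fun y hy => pd_const_mul j c (hf.differentiableAt hΩ hy)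
  rw [h.pd_eq, pd_const_mul i c (hf.differentiableAt_pd hΩ hx j)]

theorem pd_pd_sum (hΩ : IsOpen Ω) (hx : x ∈ Ω) {ι : Type*} (s : Finset ι) {f : ι → (Fin n → ℝ) → ℝ}
    (hf : ∀ a ∈ s, TwiceDiffOn (f a) Ω) :
    pd i (pd j (fun y => ∑ a ∈ s, f a y)) x = ∑ a ∈ s, pd i (pd j (f a)) x := by
  have h : pd j (fun y => ∑ a ∈ s, f a y) =ᶠ[𝓝 x] fun y => ∑ a ∈ s, pd j (f a) y :=
    eventually_of_mem (hΩ.mem_nhds hx) fun y hy =>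
      pd_sum j s fun a ha => (hf a ha).differentiableAt hΩ hy
  rw [h.pd_eq, pd_sum i s fun a ha => (hf a ha).differentiableAt_pd hΩ hx j]

theorem pd_pd_mul (hΩ : IsOpen Ω) (hx : x ∈ Ω) (hf : TwiceDiffOn f Ω) (hg : TwiceDiffOn g Ω) :
    pd i (pd j (fun y => f y * g y)) x = pd i (pd j f) x * g x + pd j f x * pd i g x
      + pd i f x * pd j g x + f x * pd i (pd j g) x := by
  have h : pd j (fun y => f y * g y) =ᶠ[𝓝 x] fun y => pd j f y * g y + f y * pd j g y :=
    eventually_of_mem (hΩ.mem_nhds hx) fun y hy =>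
      pd_mul j (hf.differentiableAt hΩ hy) (hg.differentiableAt hΩ hy)
  have hf' := hf.differentiableAt_pd hΩ hx j
  have hg' := hg.differentiableAt_pd hΩ hx j
  have hf₀ := hf.differentiableAt hΩ hx
  have hg₀ := hg.differentiableAt hΩ hx
  rw [h.pd_eq, pd_add i (hf'.fun_mul hg₀) (hf₀.fun_mul hg'), pd_mul i hf' hg₀, pd_mul i hf₀ hg']
  ring

end SecondDerivatives

theorem pd_pd_comp_smul {ε : ℝ} (hf : Differentiable ℝ f) (i j : Fin n)
    (hf' : DifferentiableAt ℝ (pd j f) (ε⁻¹ • x)) :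
    pd i (pd j (fun y => f (ε⁻¹ • y))) x = ε⁻¹ ^ 2 * pd i (pd j f) (ε⁻¹ • x) := by
  have h : pd j (fun y => f (ε⁻¹ • y)) = fun y => ε⁻¹ * pd j f (ε⁻¹ • y) :=
    funext fun y => pd_comp_smul j (hf _)
  rw [h, pd_const_mul (f := fun y => pd j f (ε⁻¹ • y)) i _
      (hf'.comp x (differentiableAt_id.const_smul ε⁻¹)),
    pd_comp_smul i hf']
  ring

noncomputable def doubleDotHess (M : Fin n → Fin n → ℝ) (f : (Fin n → ℝ) → ℝ)
    (x : Fin n → ℝ) : ℝ :=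
  ∑ i, ∑ j, M i j * pd i (pd j f) x

section DoubleDotHess

variable (M : Fin n → Fin n → ℝ)

theorem doubleDotHess_add (hΩ : IsOpen Ω) (hx : x ∈ Ω) (hf : TwiceDiffOn f Ω)
    (hg : TwiceDiffOn g Ω) :
    doubleDotHess M (fun y => f y + g y) x = doubleDotHess M f x + doubleDotHess M g x := by
  simp only [doubleDotHess, pd_pd_add _ _ hΩ hx hf hg, mul_add, sum_add_distrib]

theorem doubleDotHess_sub (hΩ : IsOpen Ω) (hx : x ∈ Ω) (hf : TwiceDiffOn f Ω)
    (hg : TwiceDiffOn g Ω) :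
    doubleDotHess M (fun y => f y - g y) x = doubleDotHess M f x - doubleDotHess M g x := by
  simp only [doubleDotHess, pd_pd_sub _ _ hΩ hx hf hg, mul_sub, sum_sub_distrib]

theorem doubleDotHess_const_mul (hΩ : IsOpen Ω) (hx : x ∈ Ω) (c : ℝ) (hf : TwiceDiffOn f Ω) :
    doubleDotHess M (fun y => c * f y) x = c * doubleDotHess M f x := by
  simp only [doubleDotHess, pd_pd_const_mul _ _ hΩ hx c hf, mul_sum, mul_left_comm c]

theorem doubleDotHess_sum (hΩ : IsOpen Ω) (hx : x ∈ Ω) {ι : Type*} (s : Finset ι)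
    {f : ι → (Fin n → ℝ) → ℝ} (hf : ∀ a ∈ s, TwiceDiffOn (f a) Ω) :
    doubleDotHess M (fun y => ∑ a ∈ s, f a y) x = ∑ a ∈ s, doubleDotHess M (f a) x := by
  simp only [doubleDotHess, pd_pd_sum _ _ hΩ hx s hf, mul_sum]
  exact (sum_congr rfl fun i _ => sum_comm).trans sum_comm

theorem doubleDotHess_sum_sum_sum (hΩ : IsOpen Ω) (hx : x ∈ Ω) {ι κ ν : Type*} [Fintype ι]
    [Fintype κ] [Fintype ν] {f : ι → κ → ν → (Fin n → ℝ) → ℝ}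
    (hf : ∀ a b c, TwiceDiffOn (f a b c) Ω) :
    doubleDotHess M (fun y => ∑ a, ∑ b, ∑ c, f a b c y) x
      = ∑ a, ∑ b, ∑ c, doubleDotHess M (f a b c) x := by
  rw [doubleDotHess_sum M hΩ hx _ fun a _ =>
    .sum hΩ fun b _ => .sum hΩ fun c _ => hf a b c]
  refine sum_congr rfl fun a _ => ?_
  rw [doubleDotHess_sum M hΩ hx _ fun b _ => .sum hΩ fun c _ => hf a b c]
  exact sum_congr rfl fun b _ => doubleDotHess_sum M hΩ hx _ fun c _ => hf a b c

theorem doubleDotHess_mul (hM : ∀ i j, M i j = M j i) (hΩ : IsOpen Ω) (hx : x ∈ Ω)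
    (hf : TwiceDiffOn f Ω) (hg : TwiceDiffOn g Ω) :
    doubleDotHess M (fun y => f y * g y) x = doubleDotHess M f x * g x
      + 2 * ∑ i, ∑ j, M i j * pd i f x * pd j g x + f x * doubleDotHess M g x := by
  have hcross : ∑ i, ∑ j, M i j * (pd j f x * pd i g x)
      = ∑ i, ∑ j, M i j * pd i f x * pd j g x := by
    rw [Finset.sum_comm]
    exact sum_congr rfl fun i _ => sum_congr rfl fun j _ => by rw [hM]; ring
  simp only [doubleDotHess, pd_pd_mul _ _ hΩ hx hf hg, mul_add, sum_add_distrib, hcross,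
    sum_mul, mul_sum]
  simp only [← sum_add_distrib]
  exact sum_congr rfl fun i _ => sum_congr rfl fun j _ => by ring

theorem doubleDotHess_comp_smul {ε : ℝ} (hf : Differentiable ℝ f)
    (hf' : ∀ j, DifferentiableAt ℝ (pd j f) (ε⁻¹ • x)) :
    doubleDotHess M (fun y => f (ε⁻¹ • y)) x = ε⁻¹ ^ 2 * doubleDotHess M f (ε⁻¹ • x) := by
  simp only [doubleDotHess, pd_pd_comp_smul hf _ _ (hf' _), mul_sum, mul_left_comm (ε⁻¹ ^ 2)]

theorem doubleDotHess_corrector (hM : ∀ i j, M i j = M j i) {ε : ℝ} (hε : ε ≠ 0)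
    {χ T : (Fin n → ℝ) → ℝ} (hχ : ContDiff ℝ 2 χ) (hΩ : IsOpen Ω) (hx : x ∈ Ω)
    (hT : TwiceDiffOn T Ω) :
    ε ^ 2 * doubleDotHess M (fun y => χ (ε⁻¹ • y) * T y) x
      = doubleDotHess M χ (ε⁻¹ • x) * T x
        + ε * (2 * ∑ i, ∑ j, M i j * pd i χ (ε⁻¹ • x) * pd j T x)
        + ε ^ 2 * (χ (ε⁻¹ • x) * doubleDotHess M T x) := by
  have hχ₂ := hχ.contDiffOn.twiceDiffOn isOpen_univ
  have hχs : TwiceDiffOn (fun y => χ (ε⁻¹ • y)) Ω :=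
    (hχ.comp (contDiff_id.const_smul ε⁻¹)).contDiffOn.twiceDiffOn hΩ
  rw [doubleDotHess_mul M hM hΩ hx hχs hT,
    doubleDotHess_comp_smul M (differentiableOn_univ.mp hχ₂.1)
      fun j => hχ₂.differentiableAt_pd isOpen_univ (Set.mem_univ _) j]
  simp only [pd_comp_smul _ (hχ₂.differentiableAt isOpen_univ (Set.mem_univ _))]
  have hscale : ∑ i, ∑ j, M i j * (ε⁻¹ * pd i χ (ε⁻¹ • x)) * pd j T x
      = ε⁻¹ * ∑ i, ∑ j, M i j * pd i χ (ε⁻¹ • x) * pd j T x := by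
    simp only [mul_sum]
    exact sum_congr rfl fun i _ => sum_congr rfl fun j _ => by ring
  rw [hscale]
  field_simp

theorem doubleDotHess_corrector_pd (hM : ∀ i j, M i j = M j i) {ε : ℝ} (hε : ε ≠ 0)
    {χ g : (Fin n → ℝ) → ℝ} (hχ : ContDiff ℝ 2 χ) (hΩ : IsOpen Ω) (hx : x ∈ Ω)
    (hg : ContDiffOn ℝ 3 g Ω) (d : Fin n) :
    ε ^ 2 * doubleDotHess M (fun y => χ (ε⁻¹ • y) * pd d g y) x
      = doubleDotHess M χ (ε⁻¹ • x) * pd d g x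
        + ε * ∑ i, ∑ j, M i j * (2 * pd i χ (ε⁻¹ • x) * pd d (pd j g) x
          + ε * χ (ε⁻¹ • x) * pd d (pd i (pd j g)) x) := by
  have hcomm₂ (j : Fin n) : pd j (pd d g) x = pd d (pd j g) x :=
    pd_comm ((hg.of_le (by norm_num)).contDiffAt (hΩ.mem_nhds hx)) j d
  rw [doubleDotHess_corrector M hM hε hχ hΩ hx
    ((contDiffOn_pd hΩ hg (by norm_num) d).twiceDiffOn hΩ)]
  simp only [doubleDotHess, hcomm₂, pd_pd_pd_comm hΩ hg hx _ _ d, mul_sum]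
  rw [add_assoc, ← sum_add_distrib]
  congr 1
  refine sum_congr rfl fun i _ => ?_
  rw [← sum_add_distrib]
  exact sum_congr rfl fun j _ => by ring

end DoubleDotHess

theorem Finset.sum_comm_cycle₄ {α β γ δ R : Type*} [Fintype α] [Fintype β] [Fintype γ]
    [Fintype δ] [AddCommMonoid R] (g : α → β → γ → δ → R) :
    ∑ a, ∑ b, ∑ c, ∑ d, g a b c d = ∑ b, ∑ c, ∑ d, ∑ a, g a b c d := by
  rw [Finset.sum_comm]
  refine sum_congr rfl fun b _ => ?_
  rw [Finset.sum_comm]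
  exact sum_congr rfl fun c _ => sum_comm

theorem corrected_equation_for_w_plus_z_general {n : ℕ}
    (Ω : Set (Fin n → ℝ)) (hΩ : IsOpen Ω)
    (ε : ℝ) (hε : 0 < ε)
    (A : (Fin n → ℝ) → Fin n → Fin n → ℝ)
    (hAsymm : ∀ y i j, A y i j = A y j i)
    (u : (Fin n → ℝ) → ℝ)
    (hu : ContDiffOn ℝ 5 u Ω)
    (v : Fin n → Fin n → (Fin n → ℝ) → ℝ)
    (c : Fin n → Fin n → Fin n → ℝ)
    (χ : Fin n → Fin n → Fin n → (Fin n → ℝ) → ℝ)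
    (hχ : ∀ j k l, ContDiff ℝ 2 (χ j k l))
    (hχeq : ∀ j k l, ∀ y : Fin n → ℝ,
      -(∑ i, ∑ i', A y i i' * pd i (pd i' (χ j k l)) y)
        = (∑ i, A y i j * pd i (v k l) y) - c j k l)
    (wε zε θχε : (Fin n → ℝ) → ℝ)
    (hw : TwiceDiffOn wε Ω)
    (hweq : ∀ x ∈ Ω,
      -(∑ i, ∑ j, A (ε⁻¹ • x) i j * pd i (pd j wε) x)
        = ∑ i, ∑ j, ∑ k, ∑ l,
            A (ε⁻¹ • x) i j * pd i (v k l) (ε⁻¹ • x) * pd j (pd k (pd l u)) x)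
    (hz : TwiceDiffOn zε Ω)
    (hzeq : ∀ x ∈ Ω,
      -(∑ i, ∑ j, A (ε⁻¹ • x) i j * pd i (pd j zε) x)
        = -(∑ j, ∑ k, ∑ l, c j k l * pd j (pd k (pd l u)) x))
    (hθχ : TwiceDiffOn θχε Ω)
    (hθχeq : ∀ x ∈ Ω, (∑ i, ∑ j, A (ε⁻¹ • x) i j * pd i (pd j θχε) x) = 0) :
    ∀ x ∈ Ω,
      -(∑ i, ∑ j, A (ε⁻¹ • x) i j *
          pd i (pd j (fun y => wε y + zε y -
            ε ^ 2 * ((∑ j', ∑ k, ∑ l, χ j' k l (ε⁻¹ • y) * pd j' (pd k (pd l u)) y)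
              + θχε y)) ) x)
        = ε * ∑ d, ∑ i, ∑ j, ∑ k, ∑ l, A (ε⁻¹ • x) i j *
            (2 * pd i (χ d k l) (ε⁻¹ • x) * pd d (pd j (pd k (pd l u))) x
              + ε * χ d k l (ε⁻¹ • x) * pd d (pd i (pd j (pd k (pd l u)))) x) := by
  intro x hx
  have hLw := hweq x hx
  have hLz := hzeq x hx
  have hLθ := hθχeq x hx
  set M := A (ε⁻¹ • x)
  change -doubleDotHess M wε x = _ at hLw
  change -doubleDotHess M zε x = _ at hLz
  change doubleDotHess M θχε x = 0 at hLθ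
  have hcell (d k l : Fin n) : doubleDotHess M (χ d k l) (ε⁻¹ • x)
      = c d k l - ∑ i, M i d * pd i (v k l) (ε⁻¹ • x) :=
    (neg_eq_iff_eq_neg.mp (hχeq d k l _)).trans (neg_sub _ _)
  have hu₃ (k l : Fin n) : ContDiffOn ℝ 3 (pd k (pd l u)) Ω :=
    contDiffOn_pd hΩ (contDiffOn_pd hΩ hu (m := 4) (by norm_num) l) (by norm_num) k
  have hterm (d k l : Fin n) :
      TwiceDiffOn (fun y => χ d k l (ε⁻¹ • y) * pd d (pd k (pd l u)) y) Ω :=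
    (((hχ d k l).comp (contDiff_id.const_smul ε⁻¹)).contDiffOn.mul
      (contDiffOn_pd hΩ (hu₃ k l) (by norm_num) d)).twiceDiffOn hΩ
  have hcorr (d k l : Fin n) :=
    doubleDotHess_corrector_pd M (hAsymm _) hε.ne' (hχ d k l) hΩ hx (hu₃ k l) d
  have hS : TwiceDiffOn
      (fun y => ∑ d, ∑ k, ∑ l, χ d k l (ε⁻¹ • y) * pd d (pd k (pd l u)) y) Ω :=
    .sum hΩ fun d _ => .sum hΩ fun k _ => .sum hΩ fun l _ => hterm d k l
  have hSθ := hS.add hθχ hΩ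
  change -doubleDotHess M (fun y => wε y + zε y - ε ^ 2 * (_ + θχε y)) x = _
  rw [doubleDotHess_sub M hΩ hx (hw.add hz hΩ) (hSθ.const_mul hΩ _),
    doubleDotHess_add M hΩ hx hw hz, doubleDotHess_const_mul M hΩ hx _ hSθ,
    doubleDotHess_add M hΩ hx hS hθχ, hLθ, add_zero, doubleDotHess_sum_sum_sum M hΩ hx hterm]
  simp only [mul_sum, hcorr, hcell, sub_mul, sum_mul, sum_add_distrib, sum_sub_distrib]
  rw [sum_comm_cycle₄] at hLw
  conv_rhs => enter [2, d]; rw [sum_comm_cycle₄, sum_comm_cycle₄]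
  linear_combination hLw + hLz

/-- The identity `−A(x/ε):D²(wᵋ + zᵋ − ψᵋ)
= ε ∑ a_{ij}(x/ε)[2 ∂_i χ^{dkl}(x/ε) ∂⁴_{djkl}u + ε χ^{dkl}(x/ε) ∂⁵_{dijkl}u]` on `Ω`,
where `ψᵋ = ε²(∑ χ^{jkl}(·/ε) ∂³_{jkl}u + θ_χᵋ)`. -/
theorem corrected_equation_for_w_plus_z {n : ℕ} (hn : 1 ≤ n)
    (Ω : Set (Fin n → ℝ)) (hΩ : IsOpen Ω)
    (ε : ℝ) (hε : 0 < ε)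
    (A : (Fin n → ℝ) → Fin n → Fin n → ℝ)
    (hAsymm : ∀ y i j, A y i j = A y j i)
    (u : (Fin n → ℝ) → ℝ)
    (hu : ContDiffOn ℝ 5 u Ω)
    (v : Fin n → Fin n → (Fin n → ℝ) → ℝ)
    (hv : ∀ k l, ContDiff ℝ 1 (v k l))
    (c : Fin n → Fin n → Fin n → ℝ)
    (χ : Fin n → Fin n → Fin n → (Fin n → ℝ) → ℝ)
    (hχ : ∀ j k l, ContDiff ℝ 2 (χ j k l))
    (hχeq : ∀ j k l, ∀ y : Fin n → ℝ,
      -(∑ i, ∑ i', A y i i' * pd i (pd i' (χ j k l)) y)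
        = (∑ i, A y i j * pd i (v k l) y) - c j k l)
    (wε zε θχε : (Fin n → ℝ) → ℝ)
    (hw : TwiceDiffOn wε Ω)
    (hweq : ∀ x ∈ Ω,
      -(∑ i, ∑ j, A (ε⁻¹ • x) i j * pd i (pd j wε) x)
        = ∑ i, ∑ j, ∑ k, ∑ l,
            A (ε⁻¹ • x) i j * pd i (v k l) (ε⁻¹ • x) * pd j (pd k (pd l u)) x)
    (hz : TwiceDiffOn zε Ω)
    (hzeq : ∀ x ∈ Ω,
      -(∑ i, ∑ j, A (ε⁻¹ • x) i j * pd i (pd j zε) x)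
        = -(∑ j, ∑ k, ∑ l, c j k l * pd j (pd k (pd l u)) x))
    (hθχ : TwiceDiffOn θχε Ω)
    (hθχeq : ∀ x ∈ Ω, (∑ i, ∑ j, A (ε⁻¹ • x) i j * pd i (pd j θχε) x) = 0) :
    ∀ x ∈ Ω,
      -(∑ i, ∑ j, A (ε⁻¹ • x) i j *
          pd i (pd j (fun y => wε y + zε y -
            ε ^ 2 * ((∑ j', ∑ k, ∑ l, χ j' k l (ε⁻¹ • y) * pd j' (pd k (pd l u)) y)
              + θχε y)) ) x)
        = ε * ∑ d, ∑ i, ∑ j, ∑ k, ∑ l, A (ε⁻¹ • x) i j *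
            (2 * pd i (χ d k l) (ε⁻¹ • x) * pd d (pd j (pd k (pd l u))) x
              + ε * χ d k l (ε⁻¹ • x) * pd d (pd i (pd j (pd k (pd l u)))) x) :=
  corrected_equation_for_w_plus_z_general Ω hΩ ε hε A hAsymm u hu v c χ hχ hχeq wε zε θχε hw hweq hz
    hzeq hθχ hθχeq
end
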